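/- (Theorem 2.) For every s ∈ {1,…,m}, the sparsity constrained kernel SVM problem (SSVM) admits a global minimizer; that is, there exists α* ∈ ℝ^m with ⟨α*, y⟩ = 0 and ‖α*‖₀ ≤ s such that D(α*) ≤ D(α) for every α ∈ ℝ^m satisfying ⟨α, y⟩ = 0 and ‖α‖₀ ≤ s. -/

import Mathlib

noncomputable section

open Finset Matrix

/-- Euclidean (ℓ₂) norm of a vector in ℝ^m. -/
def l2enorm {m : ℕ} (v : Fin m → ℝ) : ℝ := Real.sqrt (∑ i, (v i) ^ 2)

/-- The zero "norm": number of nonzero entries. -/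
def zeroNorm {m : ℕ} (α : Fin m → ℝ) : ℕ := {i | α i ≠ 0}.ncard

/-- The soft-margin loss ℓ_{cC}. -/
def softLoss (c C t : ℝ) : ℝ := if 0 ≤ t then C * t ^ 2 / 2 else c * t ^ 2 / 2

/-- The dual penalty h_{cC}. -/
def hLoss (c C t : ℝ) : ℝ := if 0 ≤ t then t ^ 2 / (2 * C) else t ^ 2 / (2 * c)

/-- The matrix Q whose j-th column is y_j · x_j. -/
def Qmat {m n : ℕ} (x : Fin m → Fin n → ℝ) (y : Fin m → ℝ) : Matrix (Fin n) (Fin m) ℝ :=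
  Matrix.of fun i j => y j * x j i

/-- The diagonal matrix E(α). -/
def Emat {m : ℕ} (c C : ℝ) (α : Fin m → ℝ) : Matrix (Fin m) (Fin m) ℝ :=
  Matrix.diagonal fun i => if 0 ≤ α i then 1 / C else 1 / c

/-- The Hessian H(α) = QᵀQ + E(α). -/
def Hmat {m n : ℕ} (c C : ℝ) (x : Fin m → Fin n → ℝ) (y : Fin m → ℝ) (α : Fin m → ℝ) :
    Matrix (Fin m) (Fin m) ℝ :=
  (Qmat x y)ᵀ * Qmat x y + Emat c C α

/-- The dual objective D(α) = (1/2)‖Qα‖² + (1/2)⟨E(α)α, α⟩ − ⟨1, α⟩. -/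
def Dfun {m n : ℕ} (c C : ℝ) (x : Fin m → Fin n → ℝ) (y : Fin m → ℝ) (α : Fin m → ℝ) : ℝ :=
  (1 / 2) * ∑ i, ((Qmat x y).mulVec α i) ^ 2
    + (1 / 2) * ∑ i, ((Emat c C α).mulVec α i) * α i
    - ∑ i, α i

/-- g(α, b) = H(α)α − 1 + b·y. -/
def gfun {m n : ℕ} (c C : ℝ) (x : Fin m → Fin n → ℝ) (y : Fin m → ℝ)
    (α : Fin m → ℝ) (b : ℝ) : Fin m → ℝ :=
  (Hmat c C x y α).mulVec α - (fun _ => (1 : ℝ)) + b • y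

/-- The hard-thresholding operator ℙ_s(α): minimizers of ‖u − α‖ over ‖u‖₀ ≤ s. -/
def hardThr {m : ℕ} (s : ℕ) (α : Fin m → ℝ) : Set (Fin m → ℝ) :=
  {u | zeroNorm u ≤ s ∧ ∀ v : Fin m → ℝ, zeroNorm v ≤ s → l2enorm (u - α) ≤ l2enorm (v - α)}

/-- Feasibility for the sparsity constrained problem (SSVM). -/
def feasible {m : ℕ} (y : Fin m → ℝ) (s : ℕ) (α : Fin m → ℝ) : Prop :=
  ∑ i, α i * y i = 0 ∧ zeroNorm α ≤ s

/-- (α, b) is an η-stationary point of (SSVM). -/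
def etaStat {m n : ℕ} (c C : ℝ) (x : Fin m → Fin n → ℝ) (y : Fin m → ℝ) (s : ℕ) (η : ℝ)
    (α : Fin m → ℝ) (b : ℝ) : Prop :=
  α ∈ hardThr s (α - η • gfun c C x y α b) ∧ ∑ i, α i * y i = 0

/-- The family T_s(α) of index sets of s largest entries in magnitude. -/
def Tsets {m : ℕ} (s : ℕ) (α : Fin m → ℝ) : Set (Finset (Fin m)) :=
  {T | T.card = s ∧ ∀ i ∈ T, ∀ j ∉ T, |α j| ≤ |α i|}

/-- The s-th largest entry of (|α₁|, …, |α_m|). -/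
def sthLargest {m : ℕ} (s : ℕ) (α : Fin m → ℝ) : ℝ :=
  sSup {t : ℝ | s ≤ {i | t ≤ |α i|}.ncard}

/-- Euclidean distance between pairs (α, b) and (α', b') in ℝ^m × ℝ. -/
def pairDist {m : ℕ} (α : Fin m → ℝ) (b : ℝ) (α' : Fin m → ℝ) (b' : ℝ) : ℝ :=
  Real.sqrt ((∑ i, (α i - α' i) ^ 2) + (b - b') ^ 2)

/-- Spectral (operator) norm of a matrix w.r.t. Euclidean norms. -/
def specNorm {m n : ℕ} (Q : Matrix (Fin n) (Fin m) ℝ) : ℝ :=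
  ‖LinearMap.toContinuousLinearMap (Matrix.toEuclideanLin Q)‖

open Filter

/-!
The objective is continuous (the two branches of the penalty `hLoss` agree at `0`) and coercive:
since `E(α) ≥ I / C`, one has `D(α) ≥ ‖α‖² / (2C) - m‖α‖`, so `D ≥ 0 = D(0)` outside a ball.
The feasible set is closed, because a vector with more than `s` nonzero entries keeps them under
small perturbations, and it contains `0`; a continuous function that is eventually above its value
at a feasible point attains its minimum on a closed set.
-/

theorem isClosed_setOf_ncard_support_le {ι M : Type*} [Finite ι] [TopologicalSpace M] [Zero M]
    [T1Space M] (s : ℕ) : IsClosed {f : ι → M | (Function.support f).ncard ≤ s} := by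
  refine isOpen_compl_iff.mp <| isOpen_iff_forall_mem_open.mpr fun f hf => ?_
  have hopen : IsOpen {g : ι → M | Function.support f ⊆ Function.support g} := by
    have : {g : ι → M | Function.support f ⊆ Function.support g}
        = ⋂ i ∈ Function.support f, (fun g => g i) ⁻¹' {0}ᶜ := by
      ext g; simp [Set.subset_def]
    rw [this]
    exact (Set.toFinite _).isOpen_biInter fun i _ =>
      isOpen_compl_singleton.preimage (continuous_apply i)
  refine ⟨_, fun g hg => ?_, hopen, fun _ hi => hi⟩
  simp only [Set.mem_compl_iff, Set.mem_ofPred_eq, not_le] at hf ⊢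
  exact hf.trans_le (Set.ncard_le_ncard hg)

theorem isClosed_setOf_feasible {m : ℕ} (y : Fin m → ℝ) (s : ℕ) :
    IsClosed {α : Fin m → ℝ | feasible y s α} :=
  (isClosed_eq (by fun_prop) continuous_const).inter (isClosed_setOf_ncard_support_le s)

theorem feasible_zero {m : ℕ} (y : Fin m → ℝ) (s : ℕ) : feasible y s 0 := by
  simp [feasible, zeroNorm]

theorem continuous_hLoss (c C : ℝ) : Continuous (hLoss c C) :=
  Continuous.if_le (by fun_prop) (by fun_prop) continuous_const continuous_id
    fun t ht => by simp [← ht]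

theorem sq_div_le_hLoss {c C : ℝ} (hc : 0 < c) (hcC : c ≤ C) (t : ℝ) :
    t ^ 2 / (2 * C) ≤ hLoss c C t := by
  unfold hLoss
  split_ifs
  · exact le_rfl
  · gcongr

theorem Dfun_eq_sum_hLoss {m n : ℕ} (c C : ℝ) (x : Fin m → Fin n → ℝ) (y : Fin m → ℝ)
    (α : Fin m → ℝ) :
    Dfun c C x y α
      = (1 / 2) * ∑ i, ((Qmat x y).mulVec α i) ^ 2 + ∑ i, hLoss c C (α i) - ∑ i, α i := by
  simp only [Dfun, Emat, mulVec_diagonal, mul_sum, hLoss]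
  congr 2
  refine sum_congr rfl fun i _ => ?_
  split_ifs <;> field_simp

theorem continuous_Dfun {m n : ℕ} (c C : ℝ) (x : Fin m → Fin n → ℝ) (y : Fin m → ℝ) :
    Continuous (Dfun c C x y) := by
  have := continuous_hLoss c C
  simp only [funext (Dfun_eq_sum_hLoss c C x y), mulVec, dotProduct]
  fun_prop

theorem Dfun_zero {m n : ℕ} (c C : ℝ) (x : Fin m → Fin n → ℝ) (y : Fin m → ℝ) :
    Dfun c C x y 0 = 0 := by
  simp [Dfun]

theorem sq_norm_le_sum_sq {ι : Type*} [Fintype ι] (v : ι → ℝ) : ‖v‖ ^ 2 ≤ ∑ i, v i ^ 2 := by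
  refine Real.le_sqrt (norm_nonneg v) (by positivity) |>.mp ?_
  refine (pi_norm_le_iff_of_nonneg (Real.sqrt_nonneg _)).mpr fun i => ?_
  rw [Real.norm_eq_abs, ← Real.sqrt_sq_eq_abs]
  exact Real.sqrt_le_sqrt (single_le_sum (fun j _ => sq_nonneg (v j)) (mem_univ i))

theorem sum_le_card_mul_norm {ι : Type*} [Fintype ι] (v : ι → ℝ) :
    ∑ i, v i ≤ Fintype.card ι * ‖v‖ := by
  calc ∑ i, v i ≤ ∑ _i : ι, ‖v‖ :=
        sum_le_sum fun i _ => (le_abs_self _).trans (norm_le_pi_norm v i)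
    _ = Fintype.card ι * ‖v‖ := by simp

theorem sq_norm_div_sub_le_Dfun {m n : ℕ} {c C : ℝ} (hc : 0 < c) (hcC : c ≤ C)
    (x : Fin m → Fin n → ℝ) (y : Fin m → ℝ) (α : Fin m → ℝ) :
    ‖α‖ ^ 2 / (2 * C) - m * ‖α‖ ≤ Dfun c C x y α := by
  have hquad : 0 ≤ (1 / 2) * ∑ i, ((Qmat x y).mulVec α i) ^ 2 := by positivity
  have hpenalty : ‖α‖ ^ 2 / (2 * C) ≤ ∑ i, hLoss c C (α i) :=
    calc ‖α‖ ^ 2 / (2 * C) ≤ (∑ i, α i ^ 2) / (2 * C) := by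
          gcongr
          · linarith
          · exact sq_norm_le_sum_sq α
      _ = ∑ i, α i ^ 2 / (2 * C) := sum_div _ _ _
      _ ≤ ∑ i, hLoss c C (α i) := sum_le_sum fun i _ => sq_div_le_hLoss hc hcC (α i)
  have hlinear := sum_le_card_mul_norm α
  rw [Fintype.card_fin] at hlinear
  rw [Dfun_eq_sum_hLoss]
  linarith

theorem Dfun_nonneg_of_le_norm {m n : ℕ} {c C : ℝ} (hc : 0 < c) (hcC : c ≤ C)
    (x : Fin m → Fin n → ℝ) (y : Fin m → ℝ) {α : Fin m → ℝ} (hα : 2 * C * m ≤ ‖α‖) :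
    0 ≤ Dfun c C x y α := by
  have hC : 0 < C := hc.trans_le hcC
  refine le_trans ?_ (sq_norm_div_sub_le_Dfun hc hcC x y α)
  have : m * ‖α‖ ≤ ‖α‖ ^ 2 / (2 * C) := by
    rw [le_div_iff₀ (by positivity)]
    nlinarith [norm_nonneg α]
  linarith

theorem stmt_5_general {m n : ℕ} (c C : ℝ) (hc : 0 < c) (hcC : c < C)
    (x : Fin m → Fin n → ℝ) (y : Fin m → ℝ) (s : ℕ) :
    ∃ αstar : Fin m → ℝ, feasible y s αstar ∧
      ∀ α : Fin m → ℝ, feasible y s α → Dfun c C x y αstar ≤ Dfun c C x y α := by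
  have hcoercive : ∀ᶠ α in cocompact (Fin m → ℝ), Dfun c C x y 0 ≤ Dfun c C x y α := by
    filter_upwards [tendsto_norm_cocompact_atTop.eventually_ge_atTop (2 * C * m)] with α hα
    rw [Dfun_zero]
    exact Dfun_nonneg_of_le_norm hc hcC.le x y hα
  obtain ⟨αstar, hfeas, hmin⟩ := (continuous_Dfun c C x y).continuousOn.exists_isMinOn'
    (isClosed_setOf_feasible y s) (feasible_zero y s) (hcoercive.filter_mono inf_le_left)
  exact ⟨αstar, hfeas, fun α hα => hmin hα⟩

/-- the sparsity constrained problem (SSVM) admits a global minimizer. -/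
theorem stmt_5 {m n : ℕ} (hm : 1 ≤ m) (hn : 1 ≤ n) (c C : ℝ) (hc : 0 < c) (hcC : c < C)
    (x : Fin m → Fin n → ℝ) (y : Fin m → ℝ) (hy : ∀ i, y i = 1 ∨ y i = -1)
    (s : ℕ) (hs1 : 1 ≤ s) (hs2 : s ≤ m) :
    ∃ αstar : Fin m → ℝ, feasible y s αstar ∧
      ∀ α : Fin m → ℝ, feasible y s α → Dfun c C x y αstar ≤ Dfun c C x y α :=
  stmt_5_general c C hc hcC x y s
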